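/- arXiv:1604.06226 — 3 statements merged into one kernel-verified Lean document; each statement's English description precedes it below -/
import Mathlib

section
/- Let m ≥ 0 and let λ_{i_0},…,λ_{i_{m+1}} be nonzero complex numbers with λ_{i_{m+1}} ≠ 1, λ_{i_k} = 1 for 0 ≤ k ≤ r-1 and λ_{i_k} ≠ 1 for r ≤ k ≤ m. Define the (m+1)×(m+1) matrix H = I + (1/(λ_{i_{m+1}}-1)) · L · D, where L is the matrix with (j,k)-entry equal to 1 if j ≤ k and λ_{i_{m+1}} if j > k, and D = diag(0,…,0, (λ_{i_r}-1)/λ_{i_r}, …, (λ_{i_m}-1)/λ_{i_m}) with r zeros. Then det H = (1 - λ_{i_{m+2}})/(1 - λ_{i_{m+1}}^{-1}), where λ_{i_{m+2}} = (λ_{i_0}⋯λ_{i_{m+1}})^{-1}. In particular, if λ_{i_{m+2}} ≠ 1 then H is invertible. -/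
/-!
Write `L = 𝟙𝟙ᵀ + (a - 1) S` with `S` the strictly lower triangular all-ones matrix. When
`c (a - 1) = 1`, the matrix `1 + c L D` becomes `B + c 𝟙 dᵀ` with `B = 1 + S D` unit lower
triangular. The vector `u j = ∏_{i<j} (1 - d i)` solves `B u = 𝟙` by telescoping, so
`1 + c L D = B (1 + u (c d)ᵀ)`, and the matrix determinant lemma gives
`det = 1 + c ∑ d k u k = 1 + c (1 - ∏ (1 - d i))`. In the theorem the zeros of `D` sit where
`λ_k = 1`, so `1 - d k = λ_k⁻¹` for every `k`.
-/

open Matrix Finset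

section LowerTriangular

variable {R ι : Type*} [CommRing R] [Fintype ι] [LinearOrder ι]

theorem det_one_add_strictLower (d : ι → R) :
    (1 + of fun j k : ι => if k < j then d k else 0).det = 1 := by
  have htri : (1 + of fun j k : ι => if k < j then d k else 0).BlockTriangular
      OrderDual.toDual := by
    intro j k hjk
    have hjk : j < k := hjk
    simp [hjk.ne, hjk.not_gt]
  rw [det_of_isLowerTriangular _ htri]
  exact prod_eq_one fun i _ => by simp

theorem one_add_strictLower_mulVec_prod_one_sub (d : ι → R) :
    (1 + of fun j k : ι => if k < j then d k else 0) *ᵥ (fun j => ∏ i with i < j, (1 - d i))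
      = 1 := by
  funext j
  have hfilter : ∀ i ∈ univ.filter (· < j),
      (univ.filter (· < j)).filter (· < i) = univ.filter (· < i) := fun i hi => by
    rw [filter_filter]
    exact filter_congr fun k _ => ⟨And.right, fun hki => ⟨lt_trans hki (by simpa using hi), hki⟩⟩
  rw [add_mulVec, one_mulVec, Pi.add_apply, prod_one_sub_ordered, Pi.one_apply,
    sum_congr rfl fun i hi => by rw [hfilter i hi]]
  simp only [mulVec, dotProduct, of_apply, ite_mul, zero_mul, ← sum_filter]
  exact sub_add_cancel 1 _

theorem det_one_add_smul_ite_le_mul_diagonal (a c : R) (hc : c * (a - 1) = 1) (d : ι → R) :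
    (1 + c • (of (fun j k : ι => if j ≤ k then 1 else a) * diagonal d)).det
      = 1 + c * (1 - ∏ i, (1 - d i)) := by
  set B : Matrix ι ι R := 1 + of fun j k : ι => if k < j then d k else 0
  set u : ι → R := fun j => ∏ i with i < j, (1 - d i)
  have hfactor : 1 + c • (of (fun j k : ι => if j ≤ k then 1 else a) * diagonal d)
      = B * (1 + replicateCol Unit u * replicateRow Unit (c • d)) := by
    rw [Matrix.mul_add, Matrix.mul_one, ← Matrix.mul_assoc, ← replicateCol_mulVec,
      one_add_strictLower_mulVec_prod_one_sub]
    ext j k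
    simp only [B, Matrix.add_apply, Matrix.smul_apply, mul_diagonal, of_apply, smul_eq_mul]
    rcases le_or_gt j k with h | h
    · simp [h, h.not_gt, mul_apply]
    · simp [h, h.not_ge, mul_apply]
      linear_combination d k * hc
  rw [hfactor, det_mul, det_one_add_strictLower, one_mul,
    det_one_add_replicateCol_mul_replicateRow, prod_one_sub_ordered]
  simp [u, dotProduct, mul_sum, mul_assoc]

end LowerTriangular

theorem stmt_0_general (m r : ℕ) (l : ℕ → ℂ)
    (hl0 : ∀ i ≤ m + 1, l i ≠ 0)
    (hlm1 : l (m + 1) ≠ 1)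
    (hint : ∀ k < r, l k = 1)
    (lm2 : ℂ) (hlm2 : lm2 = (∏ i ∈ Finset.range (m + 2), l i)⁻¹)
    (H : Matrix (Fin (m + 1)) (Fin (m + 1)) ℂ)
    (hH : H = 1 + (l (m + 1) - 1)⁻¹ •
      ((Matrix.of fun j k : Fin (m + 1) => if (j : ℕ) ≤ (k : ℕ) then 1 else l (m + 1)) *
        Matrix.diagonal (fun k : Fin (m + 1) =>
          if (k : ℕ) < r then 0 else (l (k : ℕ) - 1) / l (k : ℕ)))) :
    H.det = (1 - lm2) / (1 - (l (m + 1))⁻¹) ∧ (lm2 ≠ 1 → IsUnit H) := by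
  set Λ := l (m + 1)
  set P := ∏ i ∈ range (m + 1), l i
  have hΛ : Λ ≠ 0 := hl0 _ le_rfl
  have hP : P ≠ 0 := prod_ne_zero_iff.2 fun i hi => hl0 i (by simp at hi; omega)
  have hone_sub_diag : ∀ k : Fin (m + 1),
      1 - (if (k : ℕ) < r then 0 else (l k - 1) / l k) = (l k)⁻¹ := fun k => by
    split_ifs with hk
    · simp [hint k hk]
    · field_simp [hl0 k (by omega)]
      ring
  have hdet : H.det = 1 + (Λ - 1)⁻¹ * (1 - P⁻¹) := by
    simp only [← Fin.le_iff_val_le_val] at hH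
    rw [hH, det_one_add_smul_ite_le_mul_diagonal _ _ (inv_mul_cancel₀ (sub_ne_zero.2 hlm1))]
    simp only [hone_sub_diag, Fin.prod_univ_eq_prod_range (fun i => (l i)⁻¹), prod_inv_distrib, P]
  have hmain : H.det = (1 - lm2) / (1 - Λ⁻¹) := by
    have hlm2' : lm2 = (P * Λ)⁻¹ := by rw [hlm2, prod_range_succ]
    rw [hdet, hlm2']
    field_simp [sub_ne_zero.2 hlm1]
    ring
  refine ⟨hmain, fun hlm2_ne => (isUnit_iff_isUnit_det H).2 ?_⟩
  rw [hmain]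
  refine (div_ne_zero (sub_ne_zero.2 (Ne.symm hlm2_ne)) ?_).isUnit
  exact sub_ne_zero.2 fun h => hlm1 (inv_eq_one.1 h.symm)

/-- Proposition 3.1 / equation (12): determinant of the intersection matrix. -/
theorem stmt_0 (m r : ℕ) (l : ℕ → ℂ)
    (hl0 : ∀ i ≤ m + 1, l i ≠ 0)
    (hlm1 : l (m + 1) ≠ 1)
    (hint : ∀ k < r, l k = 1)
    (hnint : ∀ k, r ≤ k → k ≤ m → l k ≠ 1)
    (lm2 : ℂ) (hlm2 : lm2 = (∏ i ∈ Finset.range (m + 2), l i)⁻¹)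
    (H : Matrix (Fin (m + 1)) (Fin (m + 1)) ℂ)
    (hH : H = 1 + (l (m + 1) - 1)⁻¹ •
      ((Matrix.of fun j k : Fin (m + 1) => if (j : ℕ) ≤ (k : ℕ) then 1 else l (m + 1)) *
        Matrix.diagonal (fun k : Fin (m + 1) =>
          if (k : ℕ) < r then 0 else (l (k : ℕ) - 1) / l (k : ℕ)))) :
    H.det = (1 - lm2) / (1 - (l (m + 1))⁻¹) ∧ (lm2 ≠ 1 → IsUnit H) :=
  stmt_0_general m r l hl0 hlm1 hint lm2 hlm2 H hH
end

section
/- Let H be an invertible (m+1)×(m+1) complex matrix, v a row vector, w a column vector of size m+1, and λ_p, λ_q nonzero complex numbers. Define M = I - λ_p λ_q H w v and N = I + w v H. If v H w = (1 - λ_p λ_q)/(λ_p λ_q), then M H N = H. -/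
open Matrix

/-- Equation (24) of Corollary 6.1: the circuit matrices preserve the
intersection matrix H. -/
theorem stmt_3 (m : ℕ) (H : Matrix (Fin (m + 1)) (Fin (m + 1)) ℂ) (hH : IsUnit H)
    (v : Matrix (Fin 1) (Fin (m + 1)) ℂ) (w : Matrix (Fin (m + 1)) (Fin 1) ℂ)
    (lp lq : ℂ) (hlp : lp ≠ 0) (hlq : lq ≠ 0)
    (hvHw : (v * H * w) 0 0 = (1 - lp * lq) / (lp * lq))
    (M N : Matrix (Fin (m + 1)) (Fin (m + 1)) ℂ)
    (hM : M = 1 - (lp * lq) • (H * w * v))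
    (hN : N = 1 + w * v * H) :
    M * H * N = H := by
  have hc : lp * lq ≠ 0 := mul_ne_zero hlp hlq
  have key : v * H * w = ((1 - lp * lq) / (lp * lq)) • (1 : Matrix (Fin 1) (Fin 1) ℂ) := by
    ext i j
    fin_cases i; fin_cases j
    simpa using hvHw
  have hmid : H * w * v * H * (w * (v * H)) = ((1 - lp * lq) / (lp * lq)) • (H * w * v * H) := by
    calc H * w * v * H * (w * (v * H))
        = H * w * ((v * H * w) * (v * H)) := by simp [Matrix.mul_assoc, mul_assoc]
      _ = ((1 - lp * lq) / (lp * lq)) • (H * w * v * H) := by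
          rw [key]
          simp [Matrix.mul_smul, Matrix.mul_assoc, mul_assoc]
  subst hM hN
  have expand : (1 - (lp * lq) • (H * w * v)) * H * (1 + w * v * H)
      = H + (H * w * v * H) - (lp * lq) • (H * w * v * H)
        - (lp * lq) • (H * w * v * H * (w * (v * H))) := by
    simp only [Matrix.sub_mul, Matrix.mul_add, Matrix.one_mul, Matrix.mul_one,
      Matrix.smul_mul, Matrix.mul_smul]
    simp only [Matrix.mul_assoc, mul_assoc]
    abel_nf
  rw [expand, hmid, smul_smul, mul_div_cancel₀ _ hc]
  have : (1 - lp * lq) • (H * w * v * H) = H * w * v * H - (lp * lq) • (H * w * v * H) := by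
    rw [sub_smul, one_smul]
  rw [this]
  abel
end

section
/- With notation as in equation (12) of the paper (H the intersection matrix, i_k = k, all λ_k ≠ 1), for 0 ≤ k ≤ m: the (k, 0)-entry of H equals (λ_0-1)λ_{m+1}/(λ_0(λ_{m+1}-1)) for k ≥ 1, the (0, k)-entry equals (λ_k-1)/(λ_k(λ_{m+1}-1)) for k ≥ 1, and the (0,0)-entry equals 1 + (λ_0-1)/(λ_0(λ_{m+1}-1)) = (λ_0λ_{m+1}-1)/(λ_0(λ_{m+1}-1)). -/
open Matrix

theorem one_add_smul_mul_diagonal_apply {n R : Type*} [Fintype n] [DecidableEq n] [CommRing R]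
    (c : R) (A : Matrix n n R) (d : n → R) (i j : n) :
    (1 + c • (A * diagonal d)) i j = (1 : Matrix n n R) i j + c * A i j * d j := by
  rw [Matrix.add_apply, Matrix.smul_apply, mul_diagonal, smul_eq_mul, mul_assoc]

theorem stmt_10_general (m : ℕ) (l : ℕ → ℂ)
    (hl0 : ∀ i ≤ m + 1, l i ≠ 0)
    (hlm1 : l (m + 1) ≠ 1)
    (H : Matrix (Fin (m + 1)) (Fin (m + 1)) ℂ)
    (hH : H = 1 + (l (m + 1) - 1)⁻¹ •
      ((Matrix.of fun j k : Fin (m + 1) => if (j : ℕ) ≤ (k : ℕ) then 1 else l (m + 1)) *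
        Matrix.diagonal (fun k : Fin (m + 1) => (l (k : ℕ) - 1) / l (k : ℕ)))) :
    (∀ k : Fin (m + 1), 1 ≤ (k : ℕ) →
        H k 0 = (l 0 - 1) * l (m + 1) / (l 0 * (l (m + 1) - 1))) ∧
    (∀ k : Fin (m + 1), 1 ≤ (k : ℕ) →
        H 0 k = (l (k : ℕ) - 1) / (l (k : ℕ) * (l (m + 1) - 1))) ∧
    H 0 0 = 1 + (l 0 - 1) / (l 0 * (l (m + 1) - 1)) ∧
    H 0 0 = (l 0 * l (m + 1) - 1) / (l 0 * (l (m + 1) - 1)) := by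
  have hH_apply (j k : Fin (m + 1)) : H j k = (1 : Matrix _ _ ℂ) j k +
      (l (m + 1) - 1)⁻¹ * (if (j : ℕ) ≤ k then 1 else l (m + 1)) * ((l k - 1) / l k) := by
    rw [hH, one_add_smul_mul_diagonal_apply, of_apply]
  have hH00 : H 0 0 = 1 + (l 0 - 1) / (l 0 * (l (m + 1) - 1)) := by
    rw [hH_apply, one_apply_eq, if_pos le_rfl, Fin.val_zero, div_mul_eq_div_div]
    ring
  refine ⟨fun k hk => ?_, fun k hk => ?_, hH00, ?_⟩
  · rw [hH_apply, one_apply_ne (Fin.pos_iff_ne_zero.mp hk), Fin.val_zero,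
      if_neg (by omega), zero_add, div_mul_eq_div_div]
    ring
  · rw [hH_apply, one_apply_ne (Fin.pos_iff_ne_zero.mp hk).symm, Fin.val_zero,
      if_pos (Nat.zero_le _), zero_add, div_mul_eq_div_div]
    ring
  · have hl0_zero : l 0 ≠ 0 := hl0 0 (Nat.zero_le _)
    have hs : l (m + 1) - 1 ≠ 0 := sub_ne_zero.mpr hlm1
    rw [hH00]
    field_simp
    ring

/-- Proof of Proposition 3.1: the first-row and first-column entries of the
intersection matrix H of equation (12) (case i_k = k, all λ_k ≠ 1). -/
theorem stmt_10 (m : ℕ) (l : ℕ → ℂ)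
    (hl0 : ∀ i ≤ m + 1, l i ≠ 0)
    (hlm1 : l (m + 1) ≠ 1)
    (hall : ∀ k ≤ m, l k ≠ 1)
    (H : Matrix (Fin (m + 1)) (Fin (m + 1)) ℂ)
    (hH : H = 1 + (l (m + 1) - 1)⁻¹ •
      ((Matrix.of fun j k : Fin (m + 1) => if (j : ℕ) ≤ (k : ℕ) then 1 else l (m + 1)) *
        Matrix.diagonal (fun k : Fin (m + 1) => (l (k : ℕ) - 1) / l (k : ℕ)))) :
    (∀ k : Fin (m + 1), 1 ≤ (k : ℕ) →
        H k 0 = (l 0 - 1) * l (m + 1) / (l 0 * (l (m + 1) - 1))) ∧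
    (∀ k : Fin (m + 1), 1 ≤ (k : ℕ) →
        H 0 k = (l (k : ℕ) - 1) / (l (k : ℕ) * (l (m + 1) - 1))) ∧
    H 0 0 = 1 + (l 0 - 1) / (l 0 * (l (m + 1) - 1)) ∧
    H 0 0 = (l 0 * l (m + 1) - 1) / (l 0 * (l (m + 1) - 1)) :=
  stmt_10_general m l hl0 hlm1 H hH
end
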